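/- Let q be a prime and let h ∈ F_q[[t]] with h = t + O(t^2) satisfy Θh = -h^2 where Θf = -t^2 f'. Write h^{q+1} = Σ_{n ≥ q+1} a_n(q+1) t^n. Then a_{q^i+1}(q+1) = 0 for all integers i ≥ 2. -/

import Mathlib

/-!
Since `t²h' = h²`, we get `t² (h^(k+1))' = (k+1) h^(k+2)`, i.e. `n a_n(k+1) = (k+1) a_{n+1}(k+2)`.
Iterating this `q - 1` times from `a_{qⁱ+1}(q+1)` reaches the coefficient of `t^{q(q^{i-1}+1)}`
in `h^{2q} = (h²)^q`; the multipliers at both ends reduce to `(q-1)! ≠ 0` in `𝔽_q`. By Frobenius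
that coefficient is the coefficient of `t^{q^{i-1}+1}` in `h² = t²h'`, which is
`q^{i-1} a_{q^{i-1}}(1) = 0`.
-/

open PowerSeries

theorem PowerSeries.coeff_mul_pow_expChar {R : Type*} [CommRing R] (p : ℕ) [ExpChar R p]
    (f : R⟦X⟧) (m : ℕ) : coeff (p * m) (f ^ p) = coeff m f ^ p := by
  have hp : p ≠ 0 := expChar_ne_zero R p
  rw [← MvPowerSeries.map_frobenius_expand p hp (f := f)]
  change coeff (p * m) (map (frobenius R p) (expand p hp f)) = _
  rw [coeff_map, coeff_expand_mul, frobenius_def]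

theorem Nat.cast_ascFactorial_of_cast_eq_one {R : Type*} [Semiring R] {n : ℕ} (hn : (n : R) = 1)
    (j : ℕ) : (n.ascFactorial j : R) = j.factorial := by
  rw [← ascPochhammer_nat_eq_ascFactorial, ascPochhammer_eval_cast, hn, ← Nat.cast_one,
    ← ascPochhammer_eval_cast, ascPochhammer_nat_eq_ascFactorial, Nat.one_ascFactorial]

namespace PowerSeries

variable {R : Type*} [CommSemiring R]

theorem coeff_succ_X_sq_mul_derivative (f : R⟦X⟧) (n : ℕ) :
    coeff (n + 1) (X ^ 2 * derivative R f) = n * coeff n f := by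
  cases n with
  | zero => simp [coeff_X_pow_mul']
  | succ n =>
    rw [show n + 1 + 1 = n + 2 from rfl, coeff_X_pow_mul, coeff_derivative, mul_comm,
      Nat.cast_succ]

variable {h : R⟦X⟧} (hh : X ^ 2 * derivative R h = h ^ 2)
include hh

theorem X_sq_mul_derivative_pow_succ (k : ℕ) :
    X ^ 2 * derivative R (h ^ (k + 1)) = ((k : R⟦X⟧) + 1) * h ^ (k + 2) := by
  rw [Derivation.leibniz_pow, Nat.add_sub_cancel, smul_eq_mul, nsmul_eq_mul, mul_left_comm,
    mul_left_comm (X ^ 2), hh]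
  push_cast
  ring

theorem coeff_succ_sq (n : ℕ) : coeff (n + 1) (h ^ 2) = n * coeff n h := by
  rw [← hh, coeff_succ_X_sq_mul_derivative]

theorem natCast_mul_coeff_pow_succ (k n : ℕ) :
    n * coeff n (h ^ (k + 1)) = ((k : R) + 1) * coeff (n + 1) (h ^ (k + 2)) := by
  have := congrArg (coeff (n + 1)) (X_sq_mul_derivative_pow_succ hh k)
  rwa [coeff_succ_X_sq_mul_derivative, ← Nat.cast_succ, ← map_natCast (C (R := R)),
    coeff_C_mul, Nat.cast_succ] at this

theorem ascFactorial_mul_coeff_pow_add (k n j : ℕ) :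
    ((k + 1).ascFactorial j : R) * coeff (n + j) (h ^ (k + 1 + j))
      = n.ascFactorial j * coeff n (h ^ (k + 1)) := by
  induction j with
  | zero => simp
  | succ j ih =>
    have step := natCast_mul_coeff_pow_succ hh (k + j) (n + j)
    rw [show k + 1 + j = k + j + 1 by ring] at ih
    rw [show k + 1 + (j + 1) = k + j + 2 by ring, ← add_assoc, Nat.ascFactorial_succ,
      Nat.ascFactorial_succ]
    push_cast at step ⊢
    calc ((k : R) + 1 + j) * (k + 1).ascFactorial j * coeff (n + j + 1) (h ^ (k + j + 2))
        = (k + 1).ascFactorial j * ((k + j + 1) * coeff (n + j + 1) (h ^ (k + j + 2))) := by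
          ring
      _ = (n + j) * ((k + 1).ascFactorial j * coeff (n + j) (h ^ (k + j + 1))) := by
          rw [← step]; ring
      _ = (n + j) * n.ascFactorial j * coeff n (h ^ (k + 1)) := by rw [ih, mul_assoc]

end PowerSeries

theorem coeff_h_pow_q_add_one_vanishes_general (q : ℕ) [Fact q.Prime]
    (h : PowerSeries (ZMod q))
    (hh : -(PowerSeries.X ^ 2 * PowerSeries.derivative (ZMod q) h) = -h ^ 2) :
    ∀ i : ℕ, 2 ≤ i → PowerSeries.coeff (q ^ i + 1) (h ^ (q + 1)) = 0 := by
  intro i hi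
  obtain ⟨i, rfl⟩ : ∃ i', i = i' + 2 := ⟨i - 2, by omega⟩
  have hq : q.Prime := Fact.out
  have hode := neg_inj.mp hh
  have hsq : coeff (q ^ (i + 1) + 1) (h ^ 2) = 0 := by simp [coeff_succ_sq hode]
  have hcast : ((q ^ (i + 2) + 1 : ℕ) : ZMod q) = 1 := by simp
  have hindex : q ^ (i + 2) + 1 + (q - 1) = q * (q ^ (i + 1) + 1) := by
    zify [hq.one_le]; ring
  have hexp : q + 1 + (q - 1) = 2 * q := by have := hq.one_le; omega
  have key := ascFactorial_mul_coeff_pow_add hode q (q ^ (i + 2) + 1) (q - 1)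
  rw [hindex, hexp, pow_mul, coeff_mul_pow_expChar, hsq, zero_pow hq.ne_zero, mul_zero,
    Nat.cast_ascFactorial_of_cast_eq_one hcast, ZMod.wilsons_lemma] at key
  simpa using key.symm

/-- for `q` prime and `h = t + O(t²) ∈ 𝔽_q⟦t⟧` with `Θh = -h²`
(`Θf = -t²f'`), writing `h^{q+1} = Σ aₙ tⁿ`, one has `a_{qⁱ+1} = 0` for all `i ≥ 2`. -/
theorem coeff_h_pow_q_add_one_vanishes (q : ℕ) [Fact q.Prime]
    (h : PowerSeries (ZMod q))
    (h0 : PowerSeries.coeff 0 h = 0)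
    (h1 : PowerSeries.coeff 1 h = 1)
    (hh : -(PowerSeries.X ^ 2 * PowerSeries.derivative (ZMod q) h) = -h ^ 2) :
    ∀ i : ℕ, 2 ≤ i → PowerSeries.coeff (q ^ i + 1) (h ^ (q + 1)) = 0 :=
  coeff_h_pow_q_add_one_vanishes_general q h hh
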